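/- arXiv:2504.17940 — 6 statements merged into one kernel-verified Lean document; each statement's English description precedes it below -/
import Mathlib

section
/- Let C be an n×n real symmetric positive definite matrix with diagonal entries σ_i² > 0, γ = (σ_1², …, σ_n²), and p > 0. Let R be an invertible n×n real matrix with ᵗR C R = I and ᵗR I(γ) R diagonal, with columns r¹, …, rⁿ, and set ξ_j = ⟨I(γ) r^j, r^j⟩ / ⟨C r^j, r^j⟩. Then det(p I(γ) − C) = p^n · ∏_{i=1}^n σ_i² (1 − 1/(p ξ_i)). -/
open Matrix Finset

/-- With `C` real symmetric positive definite, diagonal entries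
`σ_i² = C i i > 0`, `p > 0`, and `R` invertible with `ᵗR C R = I`,
`ᵗR I(γ) R` diagonal, and `ξ_j = ⟨I(γ) r^j, r^j⟩ / ⟨C r^j, r^j⟩`,
one has `det(p I(γ) − C) = p^n ∏_i σ_i² (1 − 1/(p ξ_i))`. -/
theorem stmt3 {n : ℕ}
    (C R : Matrix (Fin n) (Fin n) ℝ) (hC : C.PosDef)
    (hCdiag : ∀ i, 0 < C i i)
    (p : ℝ) (hp : 0 < p)
    (hR : IsUnit R.det)
    (hR1 : Rᵀ * C * R = 1)
    (hR2 : (Rᵀ * Matrix.diagonal (fun i => C i i) * R).IsDiag)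
    (ξ : Fin n → ℝ)
    (hξ : ∀ j, ξ j =
      ((Matrix.diagonal (fun i => C i i) *ᵥ fun i => R i j) ⬝ᵥ fun i => R i j) /
        ((C *ᵥ fun i => R i j) ⬝ᵥ fun i => R i j)) :
    (p • Matrix.diagonal (fun i => C i i) - C).det =
      p ^ n * ∏ i, (C i i * (1 - 1 / (p * ξ i))) := by
  set D := Matrix.diagonal (fun i => C i i) with hD
  have quad : ∀ (M : Matrix (Fin n) (Fin n) ℝ) (j : Fin n),
      ((M *ᵥ fun i => R i j) ⬝ᵥ fun i => R i j) = (Rᵀ * M * R) j j := by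
    intro M j
    simp only [Matrix.mul_apply, Matrix.mulVec, dotProduct,
      Matrix.transpose_apply, Finset.sum_mul, Finset.mul_sum]
    rw [Finset.sum_comm]
    refine Finset.sum_congr rfl fun i _ => Finset.sum_congr rfl fun k _ => ?_
    ring
  have hdetR : R.det ≠ 0 := hR.ne_zero
  set d : Fin n → ℝ := fun j => (Rᵀ * D * R) j j with hd
  have hdiagRDR : Rᵀ * D * R = Matrix.diagonal d := (Matrix.IsDiag.diagonal_diag hR2).symm
  have hξd : ∀ j, ξ j = d j := by
    intro j
    rw [hξ j, quad, quad, hR1]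
    simp [Matrix.one_apply_eq, hd]
  have hcol : ∀ j, ∃ i, R i j ≠ 0 := by
    intro j
    by_contra h
    push_neg at h
    exact hdetR (Matrix.det_eq_zero_of_column_eq_zero j h)
  have hdpos : ∀ j, 0 < d j := by
    intro j
    have hrepr : d j = ∑ i, C i i * R i j * R i j := by
      have h0 : d j = ((D *ᵥ fun i => R i j) ⬝ᵥ fun i => R i j) := (quad D j).symm
      rw [h0]
      simp [hD, dotProduct, Matrix.mulVec_diagonal]
    rw [hrepr]
    obtain ⟨i0, hi0⟩ := hcol j
    refine Finset.sum_pos' (fun i _ => ?_) ⟨i0, Finset.mem_univ i0, ?_⟩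
    · rw [mul_assoc]
      exact mul_nonneg (hCdiag i).le (mul_self_nonneg _)
    · rw [mul_assoc]
      exact mul_pos (hCdiag i0) (mul_self_pos.mpr hi0)
  have key : Rᵀ * (p • D - C) * R = Matrix.diagonal (fun j => p * d j - 1) := by
    have h1 : Rᵀ * (p • D - C) * R = p • (Rᵀ * D * R) - Rᵀ * C * R := by
      simp [Matrix.mul_sub, Matrix.sub_mul, Matrix.mul_smul, Matrix.smul_mul]
    rw [h1, hdiagRDR, hR1]
    ext i j
    by_cases h : i = j <;> simp [Matrix.diagonal, Matrix.one_apply, h]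
  have hdet1 : R.det ^ 2 * (p • D - C).det = ∏ j, (p * d j - 1) := by
    have := congrArg Matrix.det key
    rw [Matrix.det_mul, Matrix.det_mul, Matrix.det_transpose, Matrix.det_diagonal] at this
    rw [← this]; ring
  have hprodd : ∏ j, d j = R.det ^ 2 * ∏ i, C i i := by
    have := congrArg Matrix.det hdiagRDR
    have hDdet : D.det = ∏ i, C i i := by rw [hD, Matrix.det_diagonal]
    simp only [Matrix.det_mul, Matrix.det_transpose, Matrix.det_diagonal, hDdet] at this
    rw [← this]; ring
  have hcancel : ∀ j, p * d j - 1 = p * (d j * (1 - 1 / (p * d j))) := by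
    intro j
    have h1 : p * d j ≠ 0 := ne_of_gt (mul_pos hp (hdpos j))
    have h2 : d j ≠ 0 := (hdpos j).ne'
    field_simp
  have hprod2 : ∏ j, (p * d j - 1) = p ^ n * ((∏ j, d j) * ∏ j, (1 - 1 / (p * d j))) := by
    rw [Finset.prod_congr rfl (fun j _ => hcancel j), Finset.prod_mul_distrib,
      Finset.prod_const, Finset.prod_mul_distrib]
    simp
  have hR2ne : R.det ^ 2 ≠ 0 := pow_ne_zero 2 hdetR
  apply mul_left_cancel₀ hR2ne
  rw [hdet1, hprod2, hprodd]
  have : ∏ i, (C i i * (1 - 1 / (p * ξ i))) = (∏ i, C i i) * ∏ i, (1 - 1 / (p * d i)) := by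
    rw [← Finset.prod_mul_distrib]
    exact Finset.prod_congr rfl fun i _ => by rw [hξd i]
  rw [this]
  ring
end

section
/- Let 1 ≤ p < ∞ and let A be an n×n real positive definite matrix. Then E_A := sup_{b_1,…,b_n > 0} [∫_{ℝⁿ} (∏_{i=1}^n exp(−b_i x_i²/2)) exp(−⟨x, A x⟩/2) dx] / [∏_{i=1}^n (∫_ℝ exp(−p b_i x²/2) dx)^{1/p}] ≤ (2π)^{(n/2)(1−1/p)} / det(A)^{(1/2)(1−1/p)}. -/
open MeasureTheory Matrix Finset Real

lemma gauss1d {c : ℝ} (hc : 0 < c) :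
    ∫ t : ℝ, Real.exp (-(c * t ^ 2) / 2) = Real.sqrt (2 * π / c) := by
  have h : ∀ t : ℝ, -(c * t ^ 2) / 2 = -(c/2) * t ^ 2 := by intro t; ring
  simp_rw [h]
  rw [integral_gaussian (c/2)]
  congr 1
  field_simp

lemma gaussStd (n : ℕ) :
    ∫ y : Fin n → ℝ, Real.exp (-(y ⬝ᵥ y) / 2) = (Real.sqrt (2 * π)) ^ n := by
  have hgy : ∀ y : Fin n → ℝ, Real.exp (-(y ⬝ᵥ y) / 2)
      = ∏ i, Real.exp (-(1 * (y i) ^ 2) / 2) := by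
    intro y
    rw [← Real.exp_sum]
    congr 1
    simp only [dotProduct, one_mul, ← Finset.sum_neg_distrib, ← Finset.sum_div]
    congr 1
    congr 1
    funext i
    ring
  simp_rw [hgy]
  rw [volume_pi, MeasureTheory.integral_fintype_prod_eq_pow (ι := Fin n)
    (fun t : ℝ => Real.exp (-(1 * t ^ 2) / 2)), gauss1d one_pos]
  norm_num

open scoped MatrixOrder in
lemma exists_sqrt {n : ℕ} {B : Matrix (Fin n) (Fin n) ℝ} (hB : B.PosDef) :
    ∃ S : Matrix (Fin n) (Fin n) ℝ, S.IsHermitian ∧ S * S = B ∧ 0 ≤ S.det := by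
  classical
  refine ⟨CFC.sqrt B, (CFC.sqrt_nonneg B).posSemidef.1,
    CFC.sqrt_mul_sqrt_self B hB.posSemidef.nonneg, ?_⟩
  rw [(CFC.sqrt_nonneg B).posSemidef.1.det_eq_prod_eigenvalues]
  exact Finset.prod_nonneg fun i _ => (CFC.sqrt_nonneg B).posSemidef.eigenvalues_nonneg i

lemma gaussN {n : ℕ} {B : Matrix (Fin n) (Fin n) ℝ} (hB : B.PosDef) :
    ∫ x : Fin n → ℝ, Real.exp (-(x ⬝ᵥ (B *ᵥ x)) / 2)
      = (2 * π) ^ ((n : ℝ) / 2) / Real.sqrt B.det := by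
  classical
  obtain ⟨S, hSh, hSS, hSdetnn⟩ := exists_sqrt hB
  have hdet2 : S.det * S.det = B.det := by rw [← det_mul, hSS]
  have hBdetpos : 0 < B.det := hB.det_pos
  have hSdetpos : 0 < S.det := by
    rcases lt_or_eq_of_le hSdetnn with h | h
    · exact h
    · exfalso; rw [← h] at hdet2; simp at hdet2; linarith
  have hsqrt : Real.sqrt B.det = S.det := by
    rw [← hdet2]; exact Real.sqrt_mul_self hSdetnn
  have hT : Sᵀ = S := by rw [← Matrix.conjTranspose_eq_transpose_of_trivial]; exact hSh
  have hq : ∀ x : Fin n → ℝ, x ⬝ᵥ (B *ᵥ x) = (S *ᵥ x) ⬝ᵥ (S *ᵥ x) := by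
    intro x
    rw [← hSS, ← Matrix.mulVec_mulVec, Matrix.dotProduct_mulVec, ← Matrix.mulVec_transpose, hT]
  have hgc : Continuous (fun y : Fin n → ℝ => Real.exp (-(y ⬝ᵥ y) / 2)) := by
    apply Real.continuous_exp.comp
    apply Continuous.div_const
    apply Continuous.neg
    exact continuous_finset_sum _ fun i _ => (continuous_apply i).mul (continuous_apply i)
  have hdet' : LinearMap.det (Matrix.toLin' S) ≠ 0 := by
    rw [LinearMap.det_toLin']; exact hSdetpos.ne'
  have hmap := Real.map_linearMap_volume_pi_eq_smul_volume_pi hdet'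
  rw [LinearMap.det_toLin'] at hmap
  have hTmeas : AEMeasurable (Matrix.toLin' S) (volume : Measure (Fin n → ℝ)) :=
    (LinearMap.continuous_on_pi _).measurable.aemeasurable
  calc ∫ x : Fin n → ℝ, Real.exp (-(x ⬝ᵥ (B *ᵥ x)) / 2)
      = ∫ y, Real.exp (-(y ⬝ᵥ y) / 2) ∂(Measure.map (Matrix.toLin' S) volume) := by
        rw [integral_map hTmeas hgc.aestronglyMeasurable]
        congr 1; funext x
        simp only [Matrix.toLin'_apply]; rw [hq x]
    _ = (ENNReal.ofReal |S.det⁻¹|).toReal * ∫ y : Fin n → ℝ, Real.exp (-(y ⬝ᵥ y) / 2) := by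
        rw [hmap, integral_smul_measure]; rfl
    _ = (2 * π) ^ ((n : ℝ) / 2) / Real.sqrt B.det := by
        rw [gaussStd n, hsqrt, ENNReal.toReal_ofReal (abs_nonneg _),
          abs_of_pos (inv_pos.mpr hSdetpos)]
        rw [show (Real.sqrt (2 * π)) ^ n = (2 * π) ^ ((n : ℝ) / 2) by
          rw [Real.sqrt_eq_rpow, ← Real.rpow_natCast ((2*π) ^ (1/(2:ℝ))) n,
            ← Real.rpow_mul (by positivity)]
          congr 1; ring]
        ring
open MeasureTheory Matrix Finset Real

lemma det_one_add {n : ℕ} {M : Matrix (Fin n) (Fin n) ℝ} (hM : M.PosSemidef) :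
    ((1 : Matrix (Fin n) (Fin n) ℝ) + M).det = ∏ i, (1 + hM.1.eigenvalues i) := by
  classical
  set U : Matrix (Fin n) (Fin n) ℝ := (hM.1.eigenvectorUnitary : Matrix (Fin n) (Fin n) ℝ)
  have hU : U * star U = 1 := Matrix.mem_unitaryGroup_iff.mp (hM.1.eigenvectorUnitary).2
  have spec : M = U * Matrix.diagonal (RCLike.ofReal ∘ hM.1.eigenvalues) * star U :=
    hM.1.spectral_theorem
  have hdiag : Matrix.diagonal (RCLike.ofReal ∘ hM.1.eigenvalues)
      = Matrix.diagonal hM.1.eigenvalues := by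
    congr 1
  have key : (1 : Matrix (Fin n) (Fin n) ℝ) + M
      = U * Matrix.diagonal (fun i => 1 + hM.1.eigenvalues i) * star U := by
    have hd : Matrix.diagonal (fun i => 1 + hM.1.eigenvalues i)
        = 1 + Matrix.diagonal hM.1.eigenvalues := by
      rw [← Matrix.diagonal_one, ← Matrix.diagonal_add]
    rw [hd, Matrix.mul_add, Matrix.add_mul, Matrix.mul_one, hU, ← hdiag, ← spec]
  rw [key, Matrix.det_mul_right_comm, hU, one_mul, Matrix.det_diagonal]

lemma det_ineq {n : ℕ} {p : ℝ} (hp : 1 ≤ p) {A : Matrix (Fin n) (Fin n) ℝ} (hA : A.PosDef)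
    {b : Fin n → ℝ} (hb : ∀ i, 0 < b i) :
    A.det ^ (1 - 1/p) * (∏ i, (p * b i)) ^ (1/p) ≤ (A + Matrix.diagonal b).det := by
  have hppos : 0 < p := lt_of_lt_of_le one_pos hp
  obtain ⟨S, hSh, hSS, hSdetnn⟩ := exists_sqrt hA
  have hdet2 : S.det * S.det = A.det := by rw [← det_mul, hSS]
  have hadetpos : 0 < A.det := hA.det_pos
  have hSdetpos : 0 < S.det := by
    rcases lt_or_eq_of_le hSdetnn with h | h
    · exact h
    · exfalso; rw [← h] at hdet2; simp at hdet2; linarith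
  have hSunit : IsUnit S.det := isUnit_iff_ne_zero.mpr hSdetpos.ne'
  have h1 : S * S⁻¹ = 1 := Matrix.mul_nonsing_inv S hSunit
  have h2 : S⁻¹ * S = 1 := Matrix.nonsing_inv_mul S hSunit
  set M : Matrix (Fin n) (Fin n) ℝ := S⁻¹ * Matrix.diagonal b * S⁻¹ with hMdef
  have hSinvH : (S⁻¹)ᴴ = S⁻¹ := Matrix.IsHermitian.inv hSh
  have hMpsd : M.PosSemidef := by
    have base := Matrix.PosSemidef.mul_mul_conjTranspose_same
      (Matrix.posSemidef_diagonal_iff.mpr fun i => (hb i).le) S⁻¹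
    rw [hSinvH] at base
    rw [hMdef]
    exact base
  have hdecomp : A + Matrix.diagonal b = S * (1 + M) * S := by
    have expand : S * (1 + S⁻¹ * Matrix.diagonal b * S⁻¹) * S
        = S * S + (S * S⁻¹) * Matrix.diagonal b * (S⁻¹ * S) := by noncomm_ring
    rw [hMdef, expand, h1, h2, one_mul, mul_one, hSS]
  have hdetdecomp : (A + Matrix.diagonal b).det = A.det * ((1 : Matrix (Fin n) (Fin n) ℝ) + M).det := by
    rw [hdecomp, det_mul, det_mul, ← hdet2]; ring
  set μ := hMpsd.1.eigenvalues with hμdef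
  have hμnn : ∀ i, 0 ≤ μ i := fun i => hMpsd.eigenvalues_nonneg i
  have hdet1M : ((1 : Matrix (Fin n) (Fin n) ℝ) + M).det = ∏ i, (1 + μ i) := det_one_add hMpsd
  have hprodμ : ∏ i, μ i = (∏ i, b i) / A.det := by
    have hdetM : M.det = ∏ i, μ i := by
      rw [hMpsd.1.det_eq_prod_eigenvalues]; norm_num; rfl
    have : M.det = (S.det)⁻¹ * (∏ i, b i) * (S.det)⁻¹ := by
      rw [hMdef, det_mul, det_mul, Matrix.det_nonsing_inv, Matrix.det_diagonal,
        Ring.inverse_eq_inv']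
    rw [← hdetM, this, ← hdet2]
    field_simp
  -- scalar inequality
  have hkey : ∀ i, (p * μ i) ^ (1/p) ≤ 1 + μ i := by
    intro i
    have hq1 : (0:ℝ) ≤ 1/p := by positivity
    have hq2 : (0:ℝ) ≤ 1 - 1/p := by
      have : 1/p ≤ 1 := by rw [div_le_one hppos]; exact hp
      linarith
    have hw : 1/p + (1 - 1/p) = 1 := by ring
    have h := Real.geom_mean_le_arith_mean2_weighted hq1 hq2
      (mul_nonneg hppos.le (hμnn i)) zero_le_one hw
    rw [Real.one_rpow, mul_one] at h
    have hsimp : (1/p) * (p * μ i) = μ i := by field_simp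
    linarith [h, hsimp]
  have hprodle : ∏ i, (p * μ i) ^ (1/p) ≤ ∏ i, (1 + μ i) :=
    Finset.prod_le_prod (fun i _ => Real.rpow_nonneg (mul_nonneg hppos.le (hμnn i)) _)
      (fun i _ => hkey i)
  have hfin : A.det ^ (1 - 1/p) * (∏ i, (p * b i)) ^ (1/p)
      = A.det * (∏ i, (p * μ i)) ^ (1/p) := by
    have e1 : ∏ i, (p * μ i) = (∏ i, (p * b i)) / A.det := by
      rw [Finset.prod_mul_distrib, Finset.prod_mul_distrib, hprodμ]
      field_simp
    rw [e1, Real.div_rpow (Finset.prod_nonneg fun i _ => (mul_pos hppos (hb i)).le) hadetpos.le,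
      Real.rpow_sub hadetpos, Real.rpow_one]
    ring
  calc A.det ^ (1 - 1/p) * (∏ i, (p * b i)) ^ (1/p)
      = A.det * (∏ i, (p * μ i)) ^ (1/p) := hfin
    _ = A.det * ∏ i, (p * μ i) ^ (1/p) := by
        rw [Real.finset_prod_rpow _ _ (fun i _ => (mul_nonneg hppos.le (hμnn i))) _]
    _ ≤ A.det * ∏ i, (1 + μ i) := by
        exact mul_le_mul_of_nonneg_left hprodle hadetpos.le
    _ = (A + Matrix.diagonal b).det := by rw [hdetdecomp, hdet1M]

/-- The Brascamp–Lieb constant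
`E_A = sup_{b_1,…,b_n > 0} [∫_{ℝⁿ} (∏ e^{−b_i x_i²/2}) e^{−⟨x,Ax⟩/2} dx] /
  [∏ (∫_ℝ e^{−p b_i x²/2} dx)^{1/p}]`. -/
noncomputable def EA {n : ℕ} (p : ℝ) (A : Matrix (Fin n) (Fin n) ℝ) : ℝ :=
  ⨆ b : { b : Fin n → ℝ // ∀ i, 0 < b i },
    (∫ x : Fin n → ℝ,
        (∏ i, Real.exp (-(b.1 i * x i ^ 2) / 2)) * Real.exp (-(x ⬝ᵥ (A *ᵥ x)) / 2)) /
      ∏ i, (∫ t : ℝ, Real.exp (-(p * b.1 i * t ^ 2) / 2)) ^ (1 / p)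


/-- For `1 ≤ p < ∞` and `A` positive definite,
`E_A ≤ (2π)^{(n/2)(1−1/p)} / det(A)^{(1/2)(1−1/p)}`. -/
theorem stmt6 {n : ℕ} (p : ℝ) (hp : 1 ≤ p)
    (A : Matrix (Fin n) (Fin n) ℝ) (hA : A.PosDef) :
    EA p A ≤ (2 * π) ^ (((n : ℝ) / 2) * (1 - 1 / p)) / A.det ^ ((1 / 2) * (1 - 1 / p)) := by
  have hppos : 0 < p := lt_of_lt_of_le one_pos hp
  have hπ : (0:ℝ) < 2 * π := by positivity
  have hadetpos : 0 < A.det := hA.det_pos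
  haveI : Nonempty { b : Fin n → ℝ // ∀ i, 0 < b i } := ⟨⟨fun _ => 1, fun _ => one_pos⟩⟩
  apply ciSup_le
  rintro ⟨b, hb⟩
  have hAD : (A + Matrix.diagonal b).PosDef :=
    hA.add_posSemidef (Matrix.posSemidef_diagonal_iff.mpr fun i => (hb i).le)
  have hd : 0 < (A + Matrix.diagonal b).det := hAD.det_pos
  set C : ℝ := ∏ i, (p * b i) with hCdef
  have hC : 0 < C := Finset.prod_pos fun i _ => mul_pos hppos (hb i)
  -- numerator
  have hnum : (∫ x : Fin n → ℝ,
      (∏ i, Real.exp (-(b i * x i ^ 2) / 2)) * Real.exp (-(x ⬝ᵥ (A *ᵥ x)) / 2))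
      = (2 * π) ^ ((n : ℝ) / 2) / Real.sqrt (A + Matrix.diagonal b).det := by
    rw [← gaussN hAD]
    congr 1
    funext x
    rw [← Real.exp_sum, ← Real.exp_add]
    congr 1
    rw [Matrix.add_mulVec, dotProduct_add]
    have hdg : x ⬝ᵥ (Matrix.diagonal b *ᵥ x) = ∑ i, b i * x i ^ 2 := by
      simp only [dotProduct, Matrix.mulVec_diagonal]
      exact Finset.sum_congr rfl fun i _ => by ring
    rw [hdg]
    rw [show ∑ i, -(b i * x i ^ 2) / 2 = -(∑ i, b i * x i ^ 2) / 2 by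
      simp only [← Finset.sum_neg_distrib, ← Finset.sum_div]]
    ring
  -- denominator
  have hden : ∀ i, (∫ t : ℝ, Real.exp (-(p * b i * t ^ 2) / 2))
      = Real.sqrt (2 * π / (p * b i)) := fun i => gauss1d (mul_pos hppos (hb i))
  have hDen : (∏ i, (∫ t : ℝ, Real.exp (-(p * b i * t ^ 2) / 2)) ^ (1 / p))
      = ((2 * π) ^ n / C) ^ (1 / (2 * p)) := by
    have h1 : ∀ i : Fin n, (∫ t : ℝ, Real.exp (-(p * b i * t ^ 2) / 2)) ^ (1 / p)
        = (2 * π / (p * b i)) ^ (1 / (2 * p)) := by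
      intro i
      rw [hden i, Real.sqrt_eq_rpow,
        ← Real.rpow_mul (div_nonneg hπ.le (mul_pos hppos (hb i)).le)]
      congr 1
      ring
    simp_rw [h1]
    rw [Real.finset_prod_rpow _ _
      (fun i _ => div_nonneg hπ.le (mul_pos hppos (hb i)).le) _]
    congr 1
    rw [Finset.prod_div_distrib, Finset.prod_const, hCdef]
    congr 1
    simp
  rw [hnum, hDen]
  -- key determinant inequality
  have hkey : A.det ^ (1 - 1 / p) * C ^ (1 / p) ≤ (A + Matrix.diagonal b).det :=
    det_ineq hp hA hb
  have hsq : Real.sqrt (A.det ^ (1 - 1 / p) * C ^ (1 / p))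
      ≤ Real.sqrt (A + Matrix.diagonal b).det := Real.sqrt_le_sqrt hkey
  have E1 : Real.sqrt (A.det ^ (1 - 1 / p) * C ^ (1 / p))
      = A.det ^ ((1 / 2) * (1 - 1 / p)) * C ^ (1 / (2 * p)) := by
    rw [Real.sqrt_eq_rpow,
      Real.mul_rpow (Real.rpow_nonneg hadetpos.le _) (Real.rpow_nonneg hC.le _),
      ← Real.rpow_mul hadetpos.le, ← Real.rpow_mul hC.le]
    congr 1
    · congr 1; ring
    · congr 1; ring
  have E2 : ((2 * π) ^ n / C) ^ (1 / (2 * p))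
      = (2 * π) ^ ((n : ℝ) / (2 * p)) / C ^ (1 / (2 * p)) := by
    rw [Real.div_rpow (by positivity) hC.le, ← Real.rpow_natCast (2 * π) n,
      ← Real.rpow_mul hπ.le]
    congr 2
    ring
  -- the main identity
  have hiden : (2 * π) ^ ((n : ℝ) / 2)
      = ((2 * π) ^ (((n : ℝ) / 2) * (1 - 1 / p)) / A.det ^ ((1 / 2) * (1 - 1 / p)))
        * (Real.sqrt (A.det ^ (1 - 1 / p) * C ^ (1 / p)) * ((2 * π) ^ n / C) ^ (1 / (2 * p))) := by
    rw [E1, E2]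
    have ha' : A.det ^ ((1:ℝ) / 2 * (1 - 1 / p)) ≠ 0 :=
      ne_of_gt (Real.rpow_pos_of_pos hadetpos _)
    have hC' : C ^ ((1:ℝ) / (2 * p)) ≠ 0 := ne_of_gt (Real.rpow_pos_of_pos hC _)
    have hp0 : p ≠ 0 := hppos.ne'
    have hXY : (2 * π) ^ ((n : ℝ) / 2)
        = (2 * π) ^ (((n : ℝ) / 2) * (1 - 1 / p)) * (2 * π) ^ ((n : ℝ) / (2 * p)) := by
      rw [← Real.rpow_add hπ]
      congr 1
      field_simp
      ring
    rw [hXY]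
    field_simp
  have hDenpos : (0:ℝ) < ((2 * π) ^ n / C) ^ (1 / (2 * p)) :=
    Real.rpow_pos_of_pos (div_pos (pow_pos hπ n) hC) _
  rw [div_div, div_le_iff₀ (mul_pos (Real.sqrt_pos.mpr hd) hDenpos), hiden]
  calc ((2 * π) ^ (((n : ℝ) / 2) * (1 - 1 / p)) / A.det ^ ((1 / 2) * (1 - 1 / p)))
        * (Real.sqrt (A.det ^ (1 - 1 / p) * C ^ (1 / p)) * ((2 * π) ^ n / C) ^ (1 / (2 * p)))
      ≤ ((2 * π) ^ (((n : ℝ) / 2) * (1 - 1 / p)) / A.det ^ ((1 / 2) * (1 - 1 / p)))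
        * (Real.sqrt (A + Matrix.diagonal b).det * ((2 * π) ^ n / C) ^ (1 / (2 * p))) := by
        apply mul_le_mul_of_nonneg_left _
          (div_nonneg (Real.rpow_nonneg hπ.le _) (Real.rpow_nonneg hadetpos.le _))
        exact mul_le_mul_of_nonneg_right hsq hDenpos.le
    _ = (2 * π) ^ (((n : ℝ) / 2) * (1 - 1 / p)) / A.det ^ ((1 / 2) * (1 - 1 / p))
        * (Real.sqrt (A + Matrix.diagonal b).det * ((2 * π) ^ n / C) ^ (1 / (2 * p))) := rfl
end

section
/- Let C be an n×n real symmetric positive definite matrix with diagonal entries σ_i² > 0, γ = (σ_1², …, σ_n²), and let R be an invertible n×n real matrix with ᵗR C R = I and ᵗR I(γ) R diagonal, with columns r¹, …, rⁿ, and ξ_j = ⟨I(γ) r^j, r^j⟩ / ⟨C r^j, r^j⟩. If p > max_{1≤i≤n} 1/ξ_i, then det(p I(γ) − C) > 0. -/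
open Matrix Finset

/-- With `C` real symmetric positive definite (diagonal entries
`σ_i² = C i i > 0`), `R` invertible, `ᵗR C R = I`, `ᵗR I(γ) R` diagonal and
`ξ_j = ⟨I(γ) r^j, r^j⟩ / ⟨C r^j, r^j⟩`: if `p > max_i 1/ξ_i` then
`det(p I(γ) − C) > 0`. -/
theorem stmt8 {n : ℕ} [NeZero n]
    (C R : Matrix (Fin n) (Fin n) ℝ) (hC : C.PosDef)
    (hCdiag : ∀ i, 0 < C i i)
    (hR : IsUnit R.det)
    (hR1 : Rᵀ * C * R = 1)
    (hR2 : (Rᵀ * Matrix.diagonal (fun i => C i i) * R).IsDiag)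
    (ξ : Fin n → ℝ)
    (hξ : ∀ j, ξ j =
      ((Matrix.diagonal (fun i => C i i) *ᵥ fun i => R i j) ⬝ᵥ fun i => R i j) /
        ((C *ᵥ fun i => R i j) ⬝ᵥ fun i => R i j))
    (p : ℝ)
    (hp : Finset.univ.sup' Finset.univ_nonempty (fun i => 1 / ξ i) < p) :
    0 < (p • Matrix.diagonal (fun i => C i i) - C).det := by
  set D := Matrix.diagonal (fun i => C i i) with hD
  -- entry formulas
  have hentryD : ∀ j, (Rᵀ * D * R) j j =
      ((D *ᵥ fun i => R i j) ⬝ᵥ fun i => R i j) := by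
    intro j
    simp only [hD, Matrix.mul_apply, Matrix.mul_diagonal, Matrix.transpose_apply,
      Matrix.mulVec_diagonal, dotProduct, Matrix.diagonal_apply, mul_ite,
      mul_zero, Finset.sum_ite_eq, Finset.sum_ite_eq', Finset.mem_univ, if_true]
    exact Finset.sum_congr rfl fun i _ => by ring
  have hentryC : ∀ j, (Rᵀ * C * R) j j =
      ((C *ᵥ fun i => R i j) ⬝ᵥ fun i => R i j) := by
    intro j
    simp only [Matrix.mul_apply, Matrix.transpose_apply, Matrix.mulVec,
      dotProduct, Finset.sum_mul]
    rw [Finset.sum_comm]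
    refine Finset.sum_congr rfl fun k _ => ?_
    exact Finset.sum_congr rfl fun i _ => by ring
  have honej : ∀ j, ((C *ᵥ fun i => R i j) ⬝ᵥ fun i => R i j) = 1 := by
    intro j
    rw [← hentryC, hR1, Matrix.one_apply_eq]
  -- columns are nonzero
  have hcol : ∀ j, ∃ i, R i j ≠ 0 := by
    intro j
    by_contra h
    push_neg at h
    have : R.det = 0 := Matrix.det_eq_zero_of_column_eq_zero j h
    rw [this] at hR
    simp at hR
  -- ξ j > 0
  have hξpos : ∀ j, 0 < ξ j := by
    intro j
    rw [hξ j, honej j, div_one]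
    obtain ⟨i0, hi0⟩ := hcol j
    have : ((D *ᵥ fun i => R i j) ⬝ᵥ fun i => R i j)
        = ∑ i, C i i * (R i j)^2 := by
      simp only [hD, Matrix.mulVec_diagonal, dotProduct]
      exact Finset.sum_congr rfl fun i _ => by ring
    rw [this]
    refine Finset.sum_pos' (fun i _ => mul_nonneg (hCdiag i).le (sq_nonneg _))
      ⟨i0, Finset.mem_univ i0, mul_pos (hCdiag i0) (by positivity)⟩
  -- the conjugated matrix is diagonal
  have hconj : Rᵀ * (p • D - C) * R = Matrix.diagonal (fun j => p * ξ j - 1) := by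
    have h1 : Rᵀ * (p • D - C) * R = p • (Rᵀ * D * R) - Rᵀ * C * R := by
      rw [Matrix.mul_sub, Matrix.sub_mul, Matrix.mul_smul, Matrix.smul_mul]
    rw [h1, hR1]
    ext i j
    by_cases hij : i = j
    · subst hij
      simp only [Matrix.sub_apply, Matrix.smul_apply, Matrix.one_apply_eq,
        Matrix.diagonal_apply_eq, smul_eq_mul]
      rw [hentryD i, hξ i, honej i, div_one]
    · simp only [Matrix.sub_apply, Matrix.smul_apply, Matrix.one_apply_ne hij,
        Matrix.diagonal_apply_ne _ hij, smul_eq_mul, hR2 hij, mul_zero, sub_zero]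
  -- positivity of each diagonal entry
  have hpos : ∀ j, 0 < p * ξ j - 1 := by
    intro j
    have h1 : 1 / ξ j < p := lt_of_le_of_lt
      (Finset.le_sup' (fun i => 1 / ξ i) (Finset.mem_univ j)) hp
    have := (div_lt_iff₀ (hξpos j)).mp h1
    nlinarith [hξpos j]
  have hdet : (Rᵀ * (p • D - C) * R).det = (p • D - C).det * R.det ^ 2 := by
    rw [Matrix.det_mul, Matrix.det_mul, Matrix.det_transpose]
    ring
  have hdetpos : 0 < (Rᵀ * (p • D - C) * R).det := by
    rw [hconj, Matrix.det_diagonal]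
    exact Finset.prod_pos fun j _ => hpos j
  rw [hdet] at hdetpos
  have hR0 : R.det ≠ 0 := hR.ne_zero
  have hsq : 0 < R.det ^ 2 := by positivity
  nlinarith
end

section
/- Let C be an n×n real symmetric positive definite matrix with diagonal entries σ_i² > 0, γ = (σ_1², …, σ_n²), and let R be an invertible n×n real matrix with ᵗR C R = I and ᵗR I(γ) R diagonal, with columns r¹, …, rⁿ, and ξ_j = ⟨I(γ) r^j, r^j⟩ / ⟨C r^j, r^j⟩. Assume p ∉ {1/ξ_i : i = 1, …, n} and that the cardinality of {i : 1 ≤ i ≤ n, p ξ_i < 1} is even. Then det(p I(γ) − C) > 0. -/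
open Matrix Finset

lemma prod_pos_of_even_neg {ι : Type*} (s : Finset ι) (f : ι → ℝ)
    (h0 : ∀ i ∈ s, f i ≠ 0)
    (he : Even (s.filter fun i => f i < 0).card) : 0 < ∏ i ∈ s, f i := by
  rw [← Finset.prod_filter_mul_prod_filter_not s (fun i => f i < 0)]
  have h1 : 0 < ∏ i ∈ s.filter (fun i => ¬ f i < 0), f i := by
    refine Finset.prod_pos ?_
    intro i hi
    simp only [Finset.mem_filter, not_lt] at hi
    exact lt_of_le_of_ne hi.2 (Ne.symm (h0 i hi.1))
  have h2 : 0 < ∏ i ∈ s.filter (fun i => f i < 0), f i := by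
    have hrw : ∏ i ∈ s.filter (fun i => f i < 0), f i =
        (-1 : ℝ) ^ (s.filter fun i => f i < 0).card *
          ∏ i ∈ s.filter (fun i => f i < 0), (-f i) := by
      rw [← Finset.prod_const, ← Finset.prod_mul_distrib]
      simp
    rw [hrw, he.neg_one_pow, one_mul]
    refine Finset.prod_pos ?_
    intro i hi
    simp only [Finset.mem_filter] at hi
    linarith [hi.2]
  exact mul_pos h2 h1

/-- With `C` real symmetric positive definite (diagonal entries
`σ_i² = C i i > 0`), `R` invertible, `ᵗR C R = I`, `ᵗR I(γ) R` diagonal and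
`ξ_j = ⟨I(γ) r^j, r^j⟩ / ⟨C r^j, r^j⟩`: if `p ∉ {1/ξ_i : i}` and
`#{i : p ξ_i < 1}` is even, then `det(p I(γ) − C) > 0`. -/
theorem stmt9 {n : ℕ}
    (C R : Matrix (Fin n) (Fin n) ℝ) (hC : C.PosDef)
    (hCdiag : ∀ i, 0 < C i i)
    (hR : IsUnit R.det)
    (hR1 : Rᵀ * C * R = 1)
    (hR2 : (Rᵀ * Matrix.diagonal (fun i => C i i) * R).IsDiag)
    (ξ : Fin n → ℝ)
    (hξ : ∀ j, ξ j =
      ((Matrix.diagonal (fun i => C i i) *ᵥ fun i => R i j) ⬝ᵥ fun i => R i j) /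
        ((C *ᵥ fun i => R i j) ⬝ᵥ fun i => R i j))
    (p : ℝ) (hp : ∀ i, p ≠ 1 / ξ i)
    (heven : Even (Finset.univ.filter fun i => p * ξ i < 1).card) :
    0 < (p • Matrix.diagonal (fun i => C i i) - C).det := by
  set D := Matrix.diagonal (fun i => C i i) with hD
  -- diagonal entries of RᵀCR are 1
  have hden : ∀ j, ((C *ᵥ fun i => R i j) ⬝ᵥ fun i => R i j) = 1 := by
    intro j
    have := congrFun (congrFun hR1 j) j
    simp only [Matrix.mul_apply, Matrix.one_apply_eq, Matrix.transpose_apply] at this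
    rw [← this]
    simp [Matrix.mulVec, dotProduct, Finset.mul_sum, Finset.sum_mul]
    rw [Finset.sum_comm]
    congr 1; ext k; congr 1; ext l; ring
  have hnum : ∀ j, ξ j = (Rᵀ * D * R) j j := by
    intro j
    rw [hξ j, hden j, div_one]
    simp only [Matrix.mul_apply, Matrix.transpose_apply, Matrix.mulVec,
      dotProduct, Finset.sum_mul]
    rw [Finset.sum_comm]
    congr 1; ext k; congr 1; ext l; ring
  have key : Rᵀ * (p • D - C) * R = Matrix.diagonal (fun j => p * ξ j - 1) := by
    have expand : Rᵀ * (p • D - C) * R = p • (Rᵀ * D * R) - (Rᵀ * C * R) := by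
      rw [Matrix.mul_sub, Matrix.sub_mul, Matrix.mul_smul, Matrix.smul_mul]
    rw [expand, hR1]
    ext i j
    by_cases hij : i = j
    · subst hij
      simp [Matrix.diagonal_apply_eq, hnum i]
    · simp [Matrix.diagonal_apply_ne _ hij, hR2 hij, Matrix.one_apply_ne hij]
  have hdet : (R.det)^2 * (p • D - C).det = ∏ j, (p * ξ j - 1) := by
    have := congrArg Matrix.det key
    rw [Matrix.det_mul, Matrix.det_mul, Matrix.det_transpose, Matrix.det_diagonal] at this
    nlinarith [this]
  have hRd : R.det ≠ 0 := hR.ne_zero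
  have hne : ∀ j, p * ξ j - 1 ≠ 0 := by
    intro j h
    have hxne : ξ j ≠ 0 := by
      intro h0; rw [h0] at h; simp at h
    exact hp j (by field_simp; linarith)
  have hprod : 0 < ∏ j, (p * ξ j - 1) := by
    refine prod_pos_of_even_neg _ _ (fun i _ => hne i) ?_
    convert heven using 2
    ext i
    simp [sub_neg]
  have hsq : 0 < (R.det)^2 := by positivity
  nlinarith [hdet, hprod, hsq]
end

section
/- (Ostrowski's determinantal lower bound) Let A = (a_{i,j})_{1≤i,j≤n} be an n×n real (or complex) matrix which is strictly diagonally dominant, i.e., |a_{i,i}| > Σ_{j≠i} |a_{i,j}| for each i = 1, …, n. Then |det(A)| ≥ ∏_{i=1}^n (|a_{i,i}| − Σ_{j≠i} |a_{i,j}|). -/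
open Matrix Finset

private lemma det_elim_step {𝕜 : Type*} [Field 𝕜] {n : ℕ}
    (A : Matrix (Fin (n+1)) (Fin (n+1)) 𝕜) (h00 : A 0 0 ≠ 0) :
    A.det = A 0 0 *
      (Matrix.of fun i j : Fin n => A i.succ j.succ - A i.succ 0 / A 0 0 * A 0 j.succ).det := by
  set B : Matrix (Fin (n+1)) (Fin (n+1)) 𝕜 :=
    Matrix.of fun i j => if i = 0 then A i j else A i j - A i 0 / A 0 0 * A 0 j with hB
  have hdet : A.det = B.det := by
    apply Matrix.det_eq_of_forall_row_eq_smul_add_const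
      (fun i => if i = 0 then 0 else A i 0 / A 0 0) 0 (by simp)
    intro i j
    by_cases hi : i = 0 <;> simp [hB, hi]
  have hBcol : ∀ i : Fin (n+1), i ≠ 0 → B i 0 = 0 := by
    intro i hi
    simp only [hB, Matrix.of_apply, if_neg hi]
    field_simp
    ring
  rw [hdet, Matrix.det_succ_column_zero, Finset.sum_eq_single 0]
  · have h0 : B 0 0 = A 0 0 := by simp [hB]
    rw [h0]
    simp only [Fin.val_zero, pow_zero, one_mul]
    congr 1
  · intro b _ hb
    rw [hBcol b hb]; ring
  · simp

/-- Ostrowski's determinantal lower bound: If `A` (over `ℝ` or `ℂ`,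
or any `RCLike` field) is strictly diagonally dominant, i.e.
`|a_{ii}| > Σ_{j≠i} |a_{ij}|` for each `i`, then
`|det A| ≥ ∏_i (|a_{ii}| − Σ_{j≠i} |a_{ij}|)`. -/
theorem stmt15 {𝕜 : Type*} [RCLike 𝕜] {n : ℕ}
    (A : Matrix (Fin n) (Fin n) 𝕜)
    (hA : ∀ i, ∑ j ∈ Finset.univ.erase i, ‖A i j‖ < ‖A i i‖) :
    ∏ i, (‖A i i‖ - ∑ j ∈ Finset.univ.erase i, ‖A i j‖) ≤ ‖A.det‖ := by
  induction n with
  | zero => simp [Matrix.det_fin_zero]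
  | succ n ih =>
    have hA0 := hA 0
    have hsum0 : (0:ℝ) ≤ ∑ j ∈ Finset.univ.erase (0 : Fin (n+1)), ‖A 0 j‖ :=
      Finset.sum_nonneg fun j _ => norm_nonneg _
    have h00n : ‖A 0 0‖ ≠ 0 := ne_of_gt (lt_of_le_of_lt hsum0 hA0)
    have h00 : A 0 0 ≠ 0 := by simpa using h00n
    set M : Matrix (Fin n) (Fin n) 𝕜 :=
      Matrix.of fun i j : Fin n => A i.succ j.succ - A i.succ 0 / A 0 0 * A 0 j.succ with hM
    -- row sums of A in "succ" form
    have hrow : ∀ i : Fin (n+1),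
        ∑ j ∈ Finset.univ.erase i, ‖A i j‖ = (∑ j : Fin (n+1), ‖A i j‖) - ‖A i i‖ :=
      fun i => Finset.sum_erase_eq_sub (Finset.mem_univ i)
    have hQ : ∑ j : Fin n, ‖A 0 j.succ‖ < ‖A 0 0‖ := by
      have := hA 0
      rw [hrow 0, Fin.sum_univ_succ] at this
      linarith
    -- the key gap estimate
    have hgap : ∀ i : Fin n,
        ‖A i.succ i.succ‖ - ∑ j ∈ Finset.univ.erase i.succ, ‖A i.succ j‖
          ≤ ‖M i i‖ - ∑ j ∈ Finset.univ.erase i, ‖M i j‖ := by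
      intro i
      set r : ℝ := ‖A i.succ 0‖ / ‖A 0 0‖ with hrdef
      have hr0 : 0 ≤ r := by positivity
      have hb1 : ∀ j : Fin n, ‖M i j‖ ≤ ‖A i.succ j.succ‖ + r * ‖A 0 j.succ‖ := by
        intro j
        have : ‖A i.succ 0 / A 0 0 * A 0 j.succ‖ = r * ‖A 0 j.succ‖ := by
          rw [norm_mul, norm_div, hrdef]
        calc ‖M i j‖ ≤ ‖A i.succ j.succ‖ + ‖A i.succ 0 / A 0 0 * A 0 j.succ‖ :=
              norm_sub_le _ _
          _ = ‖A i.succ j.succ‖ + r * ‖A 0 j.succ‖ := by rw [this]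
      have hb2 : ‖A i.succ i.succ‖ - r * ‖A 0 i.succ‖ ≤ ‖M i i‖ := by
        have : ‖A i.succ 0 / A 0 0 * A 0 i.succ‖ = r * ‖A 0 i.succ‖ := by
          rw [norm_mul, norm_div, hrdef]
        have h := norm_sub_norm_le (A i.succ i.succ) (A i.succ 0 / A 0 0 * A 0 i.succ)
        rw [this] at h
        exact le_trans h (le_of_eq rfl)
      have hsumM : ∑ j ∈ Finset.univ.erase i, ‖M i j‖
          ≤ (∑ j : Fin n, (‖A i.succ j.succ‖ + r * ‖A 0 j.succ‖))
            - (‖A i.succ i.succ‖ + r * ‖A 0 i.succ‖) := by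
        calc ∑ j ∈ Finset.univ.erase i, ‖M i j‖
            ≤ ∑ j ∈ Finset.univ.erase i, (‖A i.succ j.succ‖ + r * ‖A 0 j.succ‖) :=
              Finset.sum_le_sum fun j _ => hb1 j
          _ = _ := Finset.sum_erase_eq_sub (Finset.mem_univ i)
      have hrQ : r * ∑ j : Fin n, ‖A 0 j.succ‖ ≤ ‖A i.succ 0‖ := by
        calc r * ∑ j : Fin n, ‖A 0 j.succ‖ ≤ r * ‖A 0 0‖ :=
              mul_le_mul_of_nonneg_left hQ.le hr0
          _ = ‖A i.succ 0‖ := div_mul_cancel₀ _ h00n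
      have hrowA : ∑ j ∈ Finset.univ.erase i.succ, ‖A i.succ j‖
          = ‖A i.succ 0‖ + (∑ j : Fin n, ‖A i.succ j.succ‖) - ‖A i.succ i.succ‖ := by
        rw [hrow i.succ, Fin.sum_univ_succ]
      rw [Finset.sum_add_distrib, ← Finset.mul_sum] at hsumM
      rw [hrowA]
      linarith [hsumM, hb2, hrQ]
    have hposA : ∀ i : Fin n,
        0 < ‖A i.succ i.succ‖ - ∑ j ∈ Finset.univ.erase i.succ, ‖A i.succ j‖ :=
      fun i => sub_pos.mpr (hA i.succ)
    have hSDDM : ∀ i, ∑ j ∈ Finset.univ.erase i, ‖M i j‖ < ‖M i i‖ := by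
      intro i
      have := lt_of_lt_of_le (hposA i) (hgap i)
      linarith
    have hdet : ‖A.det‖ = ‖A 0 0‖ * ‖M.det‖ := by
      rw [det_elim_step A h00, norm_mul]
    have hIH := ih M hSDDM
    have hprod : ∏ i : Fin n,
        (‖A i.succ i.succ‖ - ∑ j ∈ Finset.univ.erase i.succ, ‖A i.succ j‖)
        ≤ ∏ i : Fin n, (‖M i i‖ - ∑ j ∈ Finset.univ.erase i, ‖M i j‖) :=
      Finset.prod_le_prod (fun i _ => (hposA i).le) (fun i _ => hgap i)
    have hprodnn : 0 ≤ ∏ i : Fin n,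
        (‖A i.succ i.succ‖ - ∑ j ∈ Finset.univ.erase i.succ, ‖A i.succ j‖) :=
      Finset.prod_nonneg fun i _ => (hposA i).le
    rw [Fin.prod_univ_succ, hdet]
    calc (‖A 0 0‖ - ∑ j ∈ Finset.univ.erase (0:Fin (n+1)), ‖A 0 j‖) *
          ∏ i : Fin n, (‖A i.succ i.succ‖ - ∑ j ∈ Finset.univ.erase i.succ, ‖A i.succ j‖)
        ≤ ‖A 0 0‖ * ‖M.det‖ := by
          apply mul_le_mul (by linarith) (le_trans hprod hIH) hprodnn (norm_nonneg _)
end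

section
/- Let X = (X_1, …, X_n) be a centered Gaussian random vector with invertible covariance matrix C, σ_i² = E[X_i²] > 0, γ = (σ_1², …, σ_n²). Let β ≥ 1 be chosen so that β̄ := max((max_i σ_i²)/(min_i σ_i²), β) > 1, and p(X) := max_{1≤i≤n} Σ_{1≤j≤n} |E[X_i X_j]| / E[X_i²]. If p ≥ β̄ · p(X), then the matrix B := C⁻¹ − (1/p) I(γ⁻¹) satisfies det(B) ≥ (1 − 1/β̄)^n / det(C), where I(γ⁻¹) is the diagonal matrix with diagonal entries 1/σ_1², …, 1/σ_n². -/
open Matrix Finset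

lemma quad_bound {n : ℕ} (C A : Matrix (Fin n) (Fin n) ℝ)
    (hsymm : ∀ i j, C i j = C j i) (hCdiag : ∀ i, 0 < C i i)
    (hA : ∀ i j, A i j = (Real.sqrt (C i i))⁻¹ * C i j * (Real.sqrt (C j j))⁻¹)
    (pX : ℝ) (hrow : ∀ i, ∑ j, |C i j| ≤ pX * C i i) (v : Fin n → ℝ) :
    v ⬝ᵥ (A *ᵥ v) ≤ pX * ∑ i, v i ^ 2 := by
  set s : Fin n → ℝ := fun i => (Real.sqrt (C i i))⁻¹ with hs
  have hs_nonneg : ∀ i, 0 ≤ s i := fun i => inv_nonneg.2 (Real.sqrt_nonneg _)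
  set a : Fin n → ℝ := fun i => |v i| * s i with ha
  have ha_nonneg : ∀ i, 0 ≤ a i := fun i => mul_nonneg (abs_nonneg _) (hs_nonneg i)
  have hsq : ∀ i, C i i * a i ^ 2 = v i ^ 2 := by
    intro i
    have h1 : s i ^ 2 = (C i i)⁻¹ := by
      show ((Real.sqrt (C i i))⁻¹) ^ 2 = (C i i)⁻¹
      rw [← Real.sqrt_inv]
      exact Real.sq_sqrt (inv_nonneg.2 (hCdiag i).le)
    have : a i ^ 2 = v i ^ 2 * (C i i)⁻¹ := by
      rw [ha]; simp only [mul_pow, sq_abs, h1]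
    rw [this, mul_comm, mul_assoc, inv_mul_cancel₀ (hCdiag i).ne', mul_one]
  have key : ∀ i j, v i * (A i j * v j) ≤ |C i j| * (a i ^ 2 + a j ^ 2) / 2 := by
    intro i j
    have h1 : v i * (A i j * v j) ≤ |C i j| * (a i * a j) := by
      calc v i * (A i j * v j) ≤ |v i * (A i j * v j)| := le_abs_self _
        _ = |C i j| * (a i * a j) := by
          rw [hA, ha]
          rw [abs_mul, abs_mul, abs_mul, abs_mul, abs_inv, abs_inv,
            abs_of_nonneg (Real.sqrt_nonneg (C i i)), abs_of_nonneg (Real.sqrt_nonneg (C j j))]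
          ring
    have h2 : a i * a j ≤ (a i ^ 2 + a j ^ 2) / 2 := by nlinarith [sq_nonneg (a i - a j)]
    calc v i * (A i j * v j) ≤ |C i j| * ((a i ^ 2 + a j ^ 2) / 2) :=
          h1.trans (mul_le_mul_of_nonneg_left h2 (abs_nonneg _))
      _ = |C i j| * (a i ^ 2 + a j ^ 2) / 2 := by ring
  calc v ⬝ᵥ (A *ᵥ v) = ∑ i, ∑ j, v i * (A i j * v j) := by
        simp [dotProduct, mulVec, Finset.mul_sum]
    _ ≤ ∑ i, ∑ j, |C i j| * (a i ^ 2 + a j ^ 2) / 2 :=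
        Finset.sum_le_sum fun i _ => Finset.sum_le_sum fun j _ => key i j
    _ = ∑ i, ∑ j, |C i j| * a i ^ 2 := by
        have h2 : ∑ i, ∑ j, |C i j| * a j ^ 2 / 2 = ∑ i, ∑ j, |C i j| * a i ^ 2 / 2 := by
          rw [Finset.sum_comm]
          exact Finset.sum_congr rfl fun i _ => Finset.sum_congr rfl fun j _ => by
            rw [hsymm i j]
        simp only [fun i j => show |C i j| * (a i ^ 2 + a j ^ 2) / 2
            = |C i j| * a i ^ 2 / 2 + |C i j| * a j ^ 2 / 2 from by ring,
          Finset.sum_add_distrib]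
        rw [h2, ← Finset.sum_add_distrib]
        exact Finset.sum_congr rfl fun i _ => by
          rw [← Finset.sum_add_distrib]
          exact Finset.sum_congr rfl fun j _ => by ring
    _ = ∑ i, (∑ j, |C i j|) * a i ^ 2 := by
        exact Finset.sum_congr rfl fun i _ => (Finset.sum_mul _ _ _).symm
    _ ≤ ∑ i, (pX * C i i) * a i ^ 2 :=
        Finset.sum_le_sum fun i _ => mul_le_mul_of_nonneg_right (hrow i) (sq_nonneg _)
    _ = pX * ∑ i, v i ^ 2 := by
        rw [Finset.mul_sum]
        exact Finset.sum_congr rfl fun i _ => by rw [← hsq i]; ring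

/-- For a centered Gaussian vector with invertible covariance matrix
`C` (i.e. `C` real symmetric positive definite with diagonal entries
`σ_i² = C i i > 0`), `β ≥ 1` with `β̄ := max((max_i σ_i²)/(min_i σ_i²), β) > 1`,
and `p(X) := max_i Σ_j |C i j| / C i i`: if `p ≥ β̄ p(X)`, then
`B := C⁻¹ − (1/p) I(γ⁻¹)` satisfies `det(B) ≥ (1 − 1/β̄)^n / det(C)`. -/
theorem stmt17 {n : ℕ} [NeZero n]
    (C : Matrix (Fin n) (Fin n) ℝ) (hC : C.PosDef)
    (hCdiag : ∀ i, 0 < C i i)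
    (β : ℝ) (hβ : 1 ≤ β)
    (βbar : ℝ)
    (hβbar : βbar =
      max ((Finset.univ.sup' Finset.univ_nonempty fun i => C i i) /
            (Finset.univ.inf' Finset.univ_nonempty fun i => C i i)) β)
    (hβbar1 : 1 < βbar)
    (pX : ℝ)
    (hpX : pX = Finset.univ.sup' Finset.univ_nonempty fun i => (∑ j, |C i j|) / C i i)
    (p : ℝ) (hp : βbar * pX ≤ p) :
    (1 - 1 / βbar) ^ n / C.det ≤
      (C⁻¹ - (1 / p) • Matrix.diagonal (fun i => (C i i)⁻¹)).det := by
  classical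
  -- scalar facts
  have hβbarpos : (0:ℝ) < βbar := lt_trans one_pos hβbar1
  have i0 : Fin n := ⟨0, Nat.pos_of_ne_zero (NeZero.ne n)⟩
  have hpX1 : 1 ≤ pX := by
    rw [hpX]
    refine le_trans ?_ (Finset.le_sup' (f := fun i => (∑ j, |C i j|) / C i i) (Finset.mem_univ i0))
    rw [le_div_iff₀ (hCdiag i0), one_mul]
    calc C i0 i0 ≤ |C i0 i0| := le_abs_self _
      _ ≤ ∑ j, |C i0 j| := Finset.single_le_sum (f := fun j => |C i0 j|) (fun j _ => abs_nonneg _) (Finset.mem_univ i0)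
  have hpXpos : (0:ℝ) < pX := lt_of_lt_of_le one_pos hpX1
  have hppos : (0:ℝ) < p := lt_of_lt_of_le (mul_pos hβbarpos hpXpos) hp
  have hrow : ∀ i, ∑ j, |C i j| ≤ pX * C i i := by
    intro i
    have h1 : (∑ j, |C i j|) / C i i ≤ pX := by
      rw [hpX]; exact Finset.le_sup' (f := fun i => (∑ j, |C i j|) / C i i) (Finset.mem_univ i)
    calc ∑ j, |C i j| = ((∑ j, |C i j|) / C i i) * C i i :=
          (div_mul_cancel₀ _ (hCdiag i).ne').symm
      _ ≤ pX * C i i := mul_le_mul_of_nonneg_right h1 (hCdiag i).le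
  have hfrac : pX / p ≤ 1 / βbar := by
    rw [div_le_div_iff₀ hppos hβbarpos]
    nlinarith
  have h0 : (0:ℝ) ≤ 1 - 1/βbar := by
    have : 1/βbar < 1 := by rw [div_lt_one hβbarpos]; exact hβbar1
    linarith
  have hpinv : (0:ℝ) ≤ 1/p := by positivity
  have hsymm : ∀ i j, C i j = C j i := fun i j => by
    have h := congrFun (congrFun hC.1.eq i) j
    simpa using h.symm
  -- matrix setup
  set s : Fin n → ℝ := fun i => (Real.sqrt (C i i))⁻¹ with hs
  set t : Fin n → ℝ := fun i => Real.sqrt (C i i) with ht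
  have hst : ∀ i, s i * t i = 1 := fun i =>
    inv_mul_cancel₀ (Real.sqrt_pos.2 (hCdiag i)).ne'
  have hts : ∀ i, t i * s i = 1 := fun i =>
    mul_inv_cancel₀ (Real.sqrt_pos.2 (hCdiag i)).ne'
  set Ds := diagonal s with hDs
  set Dt := diagonal t with hDt
  have hDsDt : Ds * Dt = 1 := by
    rw [hDs, hDt, diagonal_mul_diagonal, ← diagonal_one]
    exact congrArg _ (funext hst)
  have hDtDs : Dt * Ds = 1 := by
    rw [hDs, hDt, diagonal_mul_diagonal, ← diagonal_one]
    exact congrArg _ (funext hts)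
  have hDsDs : Ds * Ds = diagonal (fun i => (C i i)⁻¹) := by
    rw [hDs, diagonal_mul_diagonal]
    refine congrArg _ (funext fun i => ?_)
    rw [hs]
    rw [← mul_inv, Real.mul_self_sqrt (hCdiag i).le]
  set M := Ds * C * Ds with hM
  set N := (1 : Matrix (Fin n) (Fin n) ℝ) - (1/p) • M with hN
  set P := Dt * C⁻¹ * Dt with hP
  have hCunit : IsUnit C.det := isUnit_iff_ne_zero.mpr hC.det_pos.ne'
  have hCinvC : C⁻¹ * C = 1 := nonsing_inv_mul C hCunit
  have hPM : P * M = 1 := by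
    rw [hP, hM]
    calc Dt * C⁻¹ * Dt * (Ds * C * Ds)
        = Dt * (C⁻¹ * ((Dt * Ds) * (C * Ds))) := by
          simp only [Matrix.mul_assoc]
      _ = Dt * Ds := by
          rw [hDtDs, Matrix.one_mul, ← Matrix.mul_assoc C⁻¹ C Ds, hCinvC, Matrix.one_mul]
          exact hDtDs
      _ = 1 := hDtDs
  have hPN : P * N = P - (1/p) • 1 := by
    rw [hN, Matrix.mul_sub, Matrix.mul_one, Matrix.mul_smul, hPM]
  have hBeq : C⁻¹ - (1/p) • diagonal (fun i => (C i i)⁻¹) = Ds * (P * N) * Ds := by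
    rw [hPN, Matrix.mul_sub, Matrix.sub_mul, Matrix.mul_smul, Matrix.smul_mul,
      Matrix.mul_one, hDsDs, hP]
    congr 1
    symm
    calc Ds * (Dt * C⁻¹ * Dt) * Ds = (Ds * Dt) * C⁻¹ * (Dt * Ds) := by
          simp only [Matrix.mul_assoc]
      _ = C⁻¹ := by rw [hDsDt, hDtDs, Matrix.one_mul, Matrix.mul_one]
  have hXY : Ds.det * Dt.det = 1 := by rw [← det_mul, hDsDt, det_one]
  have hdetB : (Ds * (P * N) * Ds).det = N.det / C.det := by
    rw [det_mul, det_mul, det_mul, hP, det_mul, det_mul,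
      det_nonsing_inv, Ring.inverse_eq_inv']
    rw [div_eq_mul_inv]
    linear_combination (Ds.det * Dt.det + 1) * C.det⁻¹ * N.det * hXY
  -- eigenvalue part
  have hMentry : ∀ i j, M i j = (Real.sqrt (C i i))⁻¹ * C i j * (Real.sqrt (C j j))⁻¹ := by
    intro i j
    rw [hM, hDs]
    rw [Matrix.mul_diagonal, Matrix.diagonal_mul]
  have hMH : M.IsHermitian := by
    rw [Matrix.IsHermitian]
    ext i j
    simp only [conjTranspose_apply, star_trivial]
    rw [hMentry i j, hMentry j i, hsymm i j]
    ring
  have hquad : ∀ v : Fin n → ℝ, v ⬝ᵥ (M *ᵥ v) ≤ pX * ∑ i, v i ^ 2 :=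
    fun v => quad_bound C M hsymm hCdiag hMentry pX hrow v
  have hNH : N.IsHermitian := by
    have hMt : Mᵀ = M := by simpa using hMH.eq
    rw [hN]
    simp [Matrix.IsHermitian, conjTranspose_sub, conjTranspose_smul, hMt]
  have heig : ∀ i, 1 - 1/βbar ≤ hNH.eigenvalues i := by
    intro i
    have hv := hNH.eigenvalues_eq i
    set v : Fin n → ℝ := ⇑(hNH.eigenvectorBasis i) with hvdef
    have hnorm : ∑ j, v j ^ 2 = 1 := by
      have h1 : ‖hNH.eigenvectorBasis i‖ = 1 := hNH.eigenvectorBasis.orthonormal.1 i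
      have h2 : ‖hNH.eigenvectorBasis i‖ = Real.sqrt (∑ j, v j ^ 2) := by
        rw [EuclideanSpace.norm_eq]
        congr 1
        exact Finset.sum_congr rfl fun j _ => by rw [Real.norm_eq_abs, sq_abs]
      have h3 : Real.sqrt (∑ j, v j ^ 2) = 1 := by rw [← h2, h1]
      have hnn : (0:ℝ) ≤ ∑ j, v j ^ 2 := Finset.sum_nonneg fun j _ => sq_nonneg (v j)
      nlinarith [Real.sq_sqrt hnn, Real.sqrt_nonneg (∑ j, v j ^ 2)]
    have hvv : v ⬝ᵥ v = 1 := by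
      rw [← hnorm]
      exact Finset.sum_congr rfl fun j _ => (sq (v j)).symm ▸ by ring
    have hcomp : hNH.eigenvalues i = 1 - (1/p) * (v ⬝ᵥ (M *ᵥ v)) := by
      rw [hv]
      rw [show star v = v from star_trivial v]
      rw [hN, Matrix.sub_mulVec, Matrix.one_mulVec, Matrix.smul_mulVec,
        dotProduct_sub, dotProduct_smul, hvv]
      simp
    rw [hcomp]
    have : (1/p) * (v ⬝ᵥ (M *ᵥ v)) ≤ 1/βbar := by
      calc (1/p) * (v ⬝ᵥ (M *ᵥ v)) ≤ (1/p) * (pX * ∑ j, v j ^ 2) :=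
            mul_le_mul_of_nonneg_left (hquad v) hpinv
        _ = pX / p := by rw [hnorm]; ring
        _ ≤ 1/βbar := hfrac
    linarith
  have hdetN : (1 - 1/βbar) ^ n ≤ N.det := by
    rw [hNH.det_eq_prod_eigenvalues]
    calc (1 - 1/βbar) ^ n = ∏ _i : Fin n, (1 - 1/βbar) := by
          rw [Finset.prod_const, Finset.card_univ, Fintype.card_fin]
      _ ≤ ∏ i, hNH.eigenvalues i := Finset.prod_le_prod (fun _ _ => h0) (fun i _ => heig i)
  -- conclusion
  rw [hBeq, hdetB]
  exact div_le_div_of_nonneg_right hdetN hC.det_pos.le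
end
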